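/- Let f(u) = tan u, g(u) = sec u on an open interval J ⊆ (−π/2, π/2), with α = β > 0, giving a first-type surface S₁ (ε = −1; indeed α²tan²u − α²sec²u = −α² < 0 and f'² + g'² > 0 on J). Take density exponents λ₁ = λ₂ = λ, λ₃ = μ, λ₄ = −μ (i.e., density e^{λ(x²+y²)+μ(z²−t²)}, so δ = 2λ + 2μ). Then K_φ(u) = −4(λ + μ) for every u ∈ J. -/

import Mathlib

open Real Set

/-- Weighted Gaussian curvature of the timelike general rotational surface `S_i`
(`ε = -1` for the first type, `ε = 1` for the second type) in `E₁⁴` with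
density `e^{λ₁x²+λ₂y²+λ₃z²+λ₄t²}`, where `δ = λ₁+λ₂+λ₃−λ₄`. -/
noncomputable def Kphi (α β δ ε : ℝ) (f g : ℝ → ℝ) (u : ℝ) : ℝ :=
  (-2 * δ * (α ^ 2 * (f u) ^ 2 + ε * β ^ 2 * (g u) ^ 2) ^ 2
      * (-ε * (deriv f u) ^ 2 + (deriv g u) ^ 2) ^ 2
    + α ^ 2 * β ^ 2 * (g u * deriv f u - f u * deriv g u) ^ 2
      * (-ε * (deriv f u) ^ 2 + (deriv g u) ^ 2)
    + (ε * α ^ 2 * (f u) ^ 2 + β ^ 2 * (g u) ^ 2)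
      * (β ^ 2 * g u * deriv f u + α ^ 2 * f u * deriv g u)
      * (deriv (deriv f) u * deriv g u - deriv f u * deriv (deriv g) u))
  / ((α ^ 2 * (f u) ^ 2 + ε * β ^ 2 * (g u) ^ 2) ^ 2
      * (-ε * (deriv f u) ^ 2 + (deriv g u) ^ 2) ^ 2)


theorem example_first_type_tan_sec_Kphi
    (J : Set ℝ) (hJo : IsOpen J) (hJc : J.OrdConnected)
    (hJ : J ⊆ Set.Ioo (-(π / 2)) (π / 2))
    (α lam mu : ℝ) (hα : 0 < α) :
    ∀ u ∈ J, Kphi α α (2 * lam + 2 * mu) (-1)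
        (fun u => Real.tan u) (fun u => (Real.cos u)⁻¹) u = -4 * (lam + mu) := by
  intro u huJ
  have hu := hJ huJ
  have hc : Real.cos u ≠ 0 := ne_of_gt (Real.cos_pos_of_mem_Ioo hu)
  have hs : Real.sin u ^ 2 = 1 - Real.cos u ^ 2 := Real.sin_sq u
  -- first derivative of tan
  have hdf : deriv (fun x => Real.tan x) u = 1 / Real.cos u ^ 2 := Real.deriv_tan u
  -- tan' as a global function
  have htan' : deriv (fun x => Real.tan x) = fun x => (Real.cos x ^ 2)⁻¹ := by
    funext x
    rw [Real.deriv_tan x, one_div]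
  -- second derivative of tan
  have hd2f : deriv (deriv (fun x => Real.tan x)) u
      = 2 * Real.sin u / Real.cos u ^ 3 := by
    rw [htan',
      (show HasDerivAt (fun x => (Real.cos x ^ 2)⁻¹) _ u from
        ((Real.hasDerivAt_cos u).pow 2).inv (pow_ne_zero 2 hc)).deriv]
    simp only [Pi.pow_apply]
    field_simp
    ring
  -- first derivative of sec
  have hdg : deriv (fun x => (Real.cos x)⁻¹) u = Real.sin u / Real.cos u ^ 2 := by
    rw [(show HasDerivAt (fun x => (Real.cos x)⁻¹) _ u from
      (Real.hasDerivAt_cos u).inv hc).deriv]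
    ring
  -- deriv sec equals sin/cos² near u
  have hev : deriv (fun x => (Real.cos x)⁻¹) =ᶠ[nhds u]
      fun x => Real.sin x * (Real.cos x ^ 2)⁻¹ := by
    have hopen : IsOpen {x : ℝ | Real.cos x ≠ 0} :=
      isOpen_ne.preimage Real.continuous_cos
    filter_upwards [hopen.mem_nhds hc] with x hx
    rw [(show HasDerivAt (fun x => (Real.cos x)⁻¹) _ x from
      (Real.hasDerivAt_cos x).inv hx).deriv]
    field_simp
  -- second derivative of sec
  have hd2g : deriv (deriv (fun x => (Real.cos x)⁻¹)) u
      = (1 + Real.sin u ^ 2) / Real.cos u ^ 3 := by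
    rw [hev.deriv_eq,
      (show HasDerivAt (fun x => Real.sin x * (Real.cos x ^ 2)⁻¹) _ u from
        (Real.hasDerivAt_sin u).mul
        (((Real.hasDerivAt_cos u).pow 2).inv (pow_ne_zero 2 hc))).deriv]
    simp only [Pi.pow_apply]
    field_simp
    linear_combination Real.cos u * hs
  have htanu : Real.tan u = Real.sin u / Real.cos u := Real.tan_eq_sin_div_cos u
  -- nonvanishing of the denominator pieces
  have h1s : (1 : ℝ) - Real.sin u ^ 2 ≠ 0 := by
    rw [hs]; simpa using pow_ne_zero 2 hc
  have h1p : (1 : ℝ) + Real.sin u ^ 2 ≠ 0 := by positivity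
  have hα' : α ≠ 0 := ne_of_gt hα
  simp only [Kphi, hdf, hd2f, hdg, hd2g, htanu]
  rw [div_eq_iff]
  · field_simp
    ring
  · have hA : α ^ 2 * (Real.sin u / Real.cos u) ^ 2
        + (-1 : ℝ) * α ^ 2 * ((Real.cos u)⁻¹) ^ 2
        = -(α ^ 2 * (1 - Real.sin u ^ 2) / Real.cos u ^ 2) := by
      field_simp; ring
    have hB : -(-1 : ℝ) * (1 / Real.cos u ^ 2) ^ 2
        + (Real.sin u / Real.cos u ^ 2) ^ 2
        = (1 + Real.sin u ^ 2) / Real.cos u ^ 4 := by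
      field_simp
    rw [hA, hB]
    apply mul_ne_zero <;> apply pow_ne_zero
    · rw [neg_ne_zero]
      exact div_ne_zero (mul_ne_zero (pow_ne_zero 2 hα') h1s) (pow_ne_zero 2 hc)
    · exact div_ne_zero h1p (pow_ne_zero 4 hc)
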